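/- arXiv:0708.3147 — 5 statements merged into one kernel-verified Lean document; each statement's English description precedes it below -/
import Mathlib

section
/- Let M and N be linearly independent elements of su(1,1) (over ℝ). Then M, N, and [M,N] are linearly independent over ℝ if and only if q([M,N]) ≠ 0, where q(m₁K̄x + m₂K̄y + m₃K̄z) = m₁² + m₂² - m₃². -/
/-!
Identify su(1,1) with ℝ³ through the basis `Kx, Ky, Kz`. In these coordinates the bracket
is a cross product with the sign of its third component flipped, `w = m ×' n`, so `M, N, [M,N]`
are independent iff the determinant with rows `m, n, w` is nonzero. That determinant is
`w ⬝ (m × n) = w₁² + w₂² - w₃² = q([M,N])`.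
-/

open Matrix Complex

noncomputable def Kx : Matrix (Fin 2) (Fin 2) ℂ := (1/2 : ℂ) • !![0, -Complex.I; Complex.I, 0]
noncomputable def Ky : Matrix (Fin 2) (Fin 2) ℂ := (1/2 : ℂ) • !![0, -1; -1, 0]
noncomputable def Kz : Matrix (Fin 2) (Fin 2) ℂ := (1/2 : ℂ) • !![-Complex.I, 0; 0, Complex.I]

theorem Matrix.linearIndependent_comp_row_iff_det_ne_zero {K V n : Type*} [Field K]
    [AddCommGroup V] [Module K V] [Fintype n] [DecidableEq n]
    {f : (n → K) →ₗ[K] V} (hf : Function.Injective f) (A : Matrix n n K) :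
    LinearIndependent K (f ∘ A.row) ↔ A.det ≠ 0 := by
  rw [LinearMap.linearIndependent_iff f (LinearMap.ker_eq_bot.mpr hf),
    linearIndependent_rows_iff_isUnit, isUnit_iff_isUnit_det, isUnit_iff_ne_zero]

theorem smul_Kx_add_smul_Ky_add_smul_Kz (x y z : ℝ) : x • Kx + y • Ky + z • Kz =
    !![-(z * I) / 2, (-(x * I) - y) / 2; (x * I - y) / 2, z * I / 2] := by
  ext i j
  fin_cases i <;> fin_cases j <;> simp [Kx, Ky, Kz] <;> ring

theorem commutator_smul_Kx_add_smul_Ky_add_smul_Kz (m₁ m₂ m₃ n₁ n₂ n₃ : ℝ) :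
    (m₁ • Kx + m₂ • Ky + m₃ • Kz) * (n₁ • Kx + n₂ • Ky + n₃ • Kz) -
        (n₁ • Kx + n₂ • Ky + n₃ • Kz) * (m₁ • Kx + m₂ • Ky + m₃ • Kz) =
      (m₂ * n₃ - m₃ * n₂) • Kx + (m₃ * n₁ - m₁ * n₃) • Ky + (m₂ * n₁ - m₁ * n₂) • Kz := by
  simp only [smul_Kx_add_smul_Ky_add_smul_Kz, mul_fin_two]
  ext i j
  fin_cases i <;> fin_cases j <;> simp [Complex.ext_iff] <;> constructor <;> ring

noncomputable def su11Coord : (Fin 3 → ℝ) →ₗ[ℝ] Matrix (Fin 2) (Fin 2) ℂ where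
  toFun v := v 0 • Kx + v 1 • Ky + v 2 • Kz
  map_add' u v := by simp only [Pi.add_apply, add_smul]; abel
  map_smul' c v := by simp [smul_smul, smul_add]

theorem su11Coord_injective : Function.Injective su11Coord := by
  rw [injective_iff_map_eq_zero]
  intro v hv
  obtain ⟨hz, hy, hx⟩ : v 2 = 0 ∧ v 1 = 0 ∧ v 0 = 0 := by
    simpa [su11Coord, smul_Kx_add_smul_Ky_add_smul_Kz, Complex.ext_iff]
      using And.intro (congrFun₂ hv 0 0) (congrFun₂ hv 1 0)
  ext i; fin_cases i <;> assumption

theorem stmt5_general (m₁ m₂ m₃ n₁ n₂ n₃ : ℝ)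
    (M N : Matrix (Fin 2) (Fin 2) ℂ)
    (hM : M = m₁ • Kx + m₂ • Ky + m₃ • Kz)
    (hN : N = n₁ • Kx + n₂ • Ky + n₃ • Kz) :
    LinearIndependent ℝ ![M, N, M * N - N * M] ↔
      (m₂*n₃ - m₃*n₂)^2 + (m₃*n₁ - m₁*n₃)^2 - (m₁*n₂ - m₂*n₁)^2 ≠ 0 := by
  set A : Matrix (Fin 3) (Fin 3) ℝ :=
    !![m₁, m₂, m₃; n₁, n₂, n₃; m₂ * n₃ - m₃ * n₂, m₃ * n₁ - m₁ * n₃, m₂ * n₁ - m₁ * n₂]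
  have hrows : ![M, N, M * N - N * M] = su11Coord ∘ A.row := by
    subst hM hN
    funext i
    fin_cases i <;> simp [su11Coord, A, commutator_smul_Kx_add_smul_Ky_add_smul_Kz]
  have hdet : A.det = (m₂*n₃ - m₃*n₂)^2 + (m₃*n₁ - m₁*n₃)^2 - (m₁*n₂ - m₂*n₁)^2 := by
    rw [det_fin_three]
    simp only [A, of_apply, cons_val', cons_val_zero, cons_val_one, cons_val, cons_val_fin_one]
    ring
  rw [hrows, linearIndependent_comp_row_iff_det_ne_zero su11Coord_injective, hdet]

theorem stmt5 (m₁ m₂ m₃ n₁ n₂ n₃ : ℝ)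
    (M N : Matrix (Fin 2) (Fin 2) ℂ)
    (hM : M = m₁ • Kx + m₂ • Ky + m₃ • Kz)
    (hN : N = n₁ • Kx + n₂ • Ky + n₃ • Kz)
    (hind : LinearIndependent ℝ ![M, N]) :
    LinearIndependent ℝ ![M, N, M * N - N * M] ↔
      (m₂*n₃ - m₃*n₂)^2 + (m₃*n₁ - m₁*n₃)^2 - (m₁*n₂ - m₂*n₁)^2 ≠ 0 :=
  stmt5_general m₁ m₂ m₃ n₁ n₂ n₃ M N hM hN
end

section
/- Let M and N be linearly independent elements of su(1,1). If q(M + uN) ≥ 0 for all real u and q([M,N]) ≠ 0, then q(M + uN) > 0 for all real u (i.e., M + uN is hyperbolic for each u ∈ ℝ). -/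
/-!
Along the line `u ↦ M + uN` the form `q` is a real quadratic in `u`. Since `q` is nonnegative on
the line, its discriminant is `≤ 0`; by the Lorentzian Lagrange identity that discriminant is
`4 q([M,N])`, so it is in fact negative. A quadratic with negative discriminant has no real root,
and a nonnegative one without roots is positive.
-/

open Matrix Complex

theorem quadratic_pos_of_nonneg_of_discrim_ne_zero {K : Type*} [Field K] [LinearOrder K]
    [IsStrictOrderedRing K] {a b c : K} (h : ∀ x : K, 0 ≤ a * (x * x) + b * x + c)
    (hd : discrim a b c ≠ 0) (x : K) : 0 < a * (x * x) + b * x + c := by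
  have hneg : discrim a b c < 0 := (discrim_le_zero h).lt_of_ne hd
  have hroot : a * (x * x) + b * x + c ≠ 0 :=
    quadratic_ne_zero_of_discrim_ne_sq (fun s hs => hneg.not_ge (hs ▸ sq_nonneg s)) x
  exact (h x).lt_of_ne' hroot

/-- In the coordinates `Kx, Ky, Kz` the bracket of `su(1,1)` is the Lorentzian cross product,
so the right-hand side is `4 q([M,N])`. -/
theorem discrim_lorentz_eq {R : Type*} [CommRing R] (m₁ m₂ m₃ n₁ n₂ n₃ : R) :
    discrim (n₁^2 + n₂^2 - n₃^2) (2 * (m₁*n₁ + m₂*n₂ - m₃*n₃)) (m₁^2 + m₂^2 - m₃^2)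
      = 4 * ((m₂*n₃ - m₃*n₂)^2 + (m₃*n₁ - m₁*n₃)^2 - (m₁*n₂ - m₂*n₁)^2) := by
  rw [discrim]
  ring

theorem stmt6_general (m₁ m₂ m₃ n₁ n₂ n₃ : ℝ)
    (hq : ∀ u : ℝ, (m₁ + u*n₁)^2 + (m₂ + u*n₂)^2 - (m₃ + u*n₃)^2 ≥ 0)
    (hcomm : (m₂*n₃ - m₃*n₂)^2 + (m₃*n₁ - m₁*n₃)^2 - (m₁*n₂ - m₂*n₁)^2 ≠ 0) :
    ∀ u : ℝ, (m₁ + u*n₁)^2 + (m₂ + u*n₂)^2 - (m₃ + u*n₃)^2 > 0 := by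
  have hexpand : ∀ u : ℝ, (m₁ + u*n₁)^2 + (m₂ + u*n₂)^2 - (m₃ + u*n₃)^2
      = (n₁^2 + n₂^2 - n₃^2) * (u * u) + 2 * (m₁*n₁ + m₂*n₂ - m₃*n₃) * u
        + (m₁^2 + m₂^2 - m₃^2) := fun u => by ring
  have hd := discrim_lorentz_eq m₁ m₂ m₃ n₁ n₂ n₃ ▸ mul_ne_zero four_ne_zero hcomm
  intro u
  rw [hexpand]
  exact quadratic_pos_of_nonneg_of_discrim_ne_zero (fun x => hexpand x ▸ hq x) hd u

theorem stmt6 (m₁ m₂ m₃ n₁ n₂ n₃ : ℝ)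
    (M N : Matrix (Fin 2) (Fin 2) ℂ)
    (hM : M = m₁ • Kx + m₂ • Ky + m₃ • Kz)
    (hN : N = n₁ • Kx + n₂ • Ky + n₃ • Kz)
    (hind : LinearIndependent ℝ ![M, N])
    (hq : ∀ u : ℝ, (m₁ + u*n₁)^2 + (m₂ + u*n₂)^2 - (m₃ + u*n₃)^2 ≥ 0)
    (hcomm : (m₂*n₃ - m₃*n₂)^2 + (m₃*n₁ - m₁*n₃)^2 - (m₁*n₂ - m₂*n₁)^2 ≠ 0) :
    ∀ u : ℝ, (m₁ + u*n₁)^2 + (m₂ + u*n₂)^2 - (m₃ + u*n₃)^2 > 0 :=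
  stmt6_general m₁ m₂ m₃ n₁ n₂ n₃ hq hcomm
end

section
/- For real numbers m₁, m₂, m₃, the matrix exponential exp(t·(m₁K̄x + m₂K̄y + m₃K̄z)) is a periodic function of t (with some positive period) if and only if m₁² + m₂² - m₃² < 0 or (m₁,m₂,m₃) = (0,0,0). -/
/-!
The matrix `M = m₁ K̄x + m₂ K̄y + m₃ K̄z` satisfies `M * M = (d / 4) • 1` with `d = m₁² + m₂² - m₃²`,
and `t ↦ exp (t • M)` has period `T` exactly when `exp (T • M) = 1`.

If `x * x = a ^ 2 • 1` with `a ≠ 0`, then `P = (1 + a⁻¹ • x) / 2` is idempotent and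
`x = a • P - a • (1 - P)`, so `exp x = exp a • P + exp (-a) • (1 - P)`, which is `1` iff `exp a = 1`.
For `d < 0` the scalar `a` is imaginary and a suitable `T` makes `exp a = 1`; for `d > 0` it is
real and nonzero, so `exp a ≠ 1`; for `d = 0` the matrix `T • M` squares to zero, so
`exp (T • M) = 1 + T • M`, which is `1` only if `M = 0`.
-/

open Matrix Complex

theorem periodic_exp_smul_iff {A : Type*} [NormedRing A] [NormedAlgebra ℝ A] [CompleteSpace A]
    (x : A) (T : ℝ) :
    Function.Periodic (fun t : ℝ ↦ NormedSpace.exp (t • x)) T ↔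
      NormedSpace.exp (T • x) = 1 := by
  let +nondep : NormedAlgebra ℚ A := .restrictScalars ℚ ℝ A
  have hsplit (t : ℝ) :
      NormedSpace.exp ((t + T) • x) = NormedSpace.exp (t • x) * NormedSpace.exp (T • x) := by
    rw [add_smul, NormedSpace.exp_add_of_commute (((Commute.refl x).smul_left t).smul_right T)]
  exact ⟨fun h ↦ by simpa [hsplit] using h 0, fun h t ↦ by simp only [hsplit, h, mul_one]⟩

theorem exp_eq_one_add_of_mul_self_eq_zero {A : Type*} [NormedRing A] [NormedAlgebra ℚ A]
    [CompleteSpace A] {x : A} (hx : x * x = 0) : NormedSpace.exp x = 1 + x := by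
  refine (NormedSpace.exp_series_hasSum_exp' (𝕂 := ℚ) x).unique ?_
  convert hasSum_sum_of_ne_finset_zero (L := .unconditional ℕ) (s := Finset.range 2)
    fun n hn ↦ ?_ using 1
  · simp [Finset.sum_range_succ]
  · obtain ⟨k, rfl⟩ := Nat.exists_eq_add_of_le (not_lt.mp (Finset.mem_range.not.mp hn))
    rw [pow_add, sq, hx, zero_mul, smul_zero]

namespace IsIdempotentElem

variable {𝕂 A : Type*} {P : A}

theorem smul_add_smul_one_sub_pow [CommRing 𝕂] [Ring A] [Algebra 𝕂 A]
    (hP : IsIdempotentElem P) (a b : 𝕂) (n : ℕ) :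
    (a • P + b • (1 - P)) ^ n = a ^ n • P + b ^ n • (1 - P) := by
  induction n with
  | zero => simp
  | succ n ih =>
    rw [pow_succ, ih]
    simp only [add_mul, mul_add, smul_mul_smul_comm, hP.eq, hP.one_sub.eq, hP.mul_one_sub_self,
      hP.one_sub_mul_self, smul_zero, pow_succ]
    abel

theorem exp_smul_add_smul_one_sub [RCLike 𝕂] [NormedRing A] [NormedAlgebra 𝕂 A]
    [CompleteSpace A] (hP : IsIdempotentElem P) (a b : 𝕂) :
    NormedSpace.exp (a • P + b • (1 - P)) =
      NormedSpace.exp a • P + NormedSpace.exp b • (1 - P) := by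
  have hsum := ((NormedSpace.exp_series_hasSum_exp' (𝕂 := 𝕂) a).smul_const P).add
    ((NormedSpace.exp_series_hasSum_exp' (𝕂 := 𝕂) b).smul_const (1 - P))
  refine (NormedSpace.exp_series_hasSum_exp' (𝕂 := 𝕂) _).unique ?_
  simpa only [hP.smul_add_smul_one_sub_pow, smul_add, smul_smul, smul_eq_mul] using hsum

end IsIdempotentElem

section MulSelfEqSq

variable {𝕂 A : Type*}

theorem exists_isIdempotentElem_eq_smul_add_smul_one_sub [Field 𝕂] [CharZero 𝕂] [Ring A]
    [Algebra 𝕂 A] {x : A} {a : 𝕂} (ha : a ≠ 0) (hx : x * x = a ^ 2 • 1) :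
    ∃ P : A, IsIdempotentElem P ∧ x = a • P + (-a) • (1 - P) := by
  refine ⟨(2 : 𝕂)⁻¹ • 1 + (2 * a)⁻¹ • x, ?_, ?_⟩
  · simp only [IsIdempotentElem, add_mul, mul_add, smul_mul_smul_comm, one_mul, mul_one, hx,
      smul_smul]
    match_scalars <;> field_simp <;> ring
  · match_scalars <;> field_simp <;> ring

theorem exp_eq_one_iff_of_mul_self_eq_sq [RCLike 𝕂] [NormedRing A] [NormedAlgebra 𝕂 A]
    [CompleteSpace A] [Nontrivial A] {x : A} {a : 𝕂} (ha : a ≠ 0) (hx : x * x = a ^ 2 • 1) :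
    NormedSpace.exp x = 1 ↔ NormedSpace.exp a = 1 := by
  obtain ⟨P, hP, rfl⟩ := exists_isIdempotentElem_eq_smul_add_smul_one_sub ha hx
  have hexp_mul_exp_neg : NormedSpace.exp a * NormedSpace.exp (-a) = 1 := by
    rw [← NormedSpace.exp_add_of_commute (Commute.neg_right (Commute.refl a)), add_neg_cancel,
      NormedSpace.exp_zero]
  rw [hP.exp_smul_add_smul_one_sub]
  constructor
  · intro h
    have hP_fixed : NormedSpace.exp a • P = P := by
      simpa [add_mul, smul_mul_assoc, hP.eq, hP.one_sub_mul_self] using congrArg (· * P) h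
    have hQ_fixed : NormedSpace.exp (-a) • (1 - P) = 1 - P := by
      simpa [add_mul, smul_mul_assoc, hP.one_sub.eq, hP.mul_one_sub_self] using
        congrArg (· * (1 - P)) h
    by_contra hne
    have hP_zero : P = 0 := by
      refine (smul_eq_zero.mp ?_).resolve_left (sub_ne_zero.mpr hne)
      rw [sub_smul, one_smul, hP_fixed, sub_self]
    rw [hP_zero, sub_zero] at hQ_fixed
    have hexp_neg : NormedSpace.exp (-a) = 1 :=
      smul_left_injective 𝕂 one_ne_zero (hQ_fixed.trans (one_smul 𝕂 1).symm)
    exact hne (by simpa [hexp_neg] using hexp_mul_exp_neg)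
  · intro h
    have hexp_neg : NormedSpace.exp (-a) = 1 := by simpa [h] using hexp_mul_exp_neg
    rw [h, hexp_neg, one_smul, one_smul, add_sub_cancel]

end MulSelfEqSq

section ComplexAlgebra

variable {A : Type*} [NormedRing A] [NormedAlgebra ℂ A] [CompleteSpace A] [Nontrivial A]
  {x : A} {c : ℝ}

theorem exp_smul_eq_one_of_mul_self_eq_neg (hc : c < 0) (hx : x * x = (c : ℂ) • 1) :
    NormedSpace.exp (((2 * Real.pi / √(-c) : ℝ) : ℂ) • x) = 1 := by
  set T : ℝ := 2 * Real.pi / √(-c)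
  have hT : T ^ 2 * c = -(2 * Real.pi) ^ 2 := by
    rw [div_pow, Real.sq_sqrt (neg_nonneg.mpr hc.le)]
    field_simp [hc.ne]
  have hsq : ((T : ℂ) • x) * ((T : ℂ) • x) = (2 * Real.pi * I) ^ 2 • 1 := by
    rw [smul_mul_smul_comm, hx, smul_smul]
    congr 1
    have hT' := congrArg ofReal hT
    push_cast at hT' ⊢
    linear_combination hT' - 4 * (Real.pi : ℂ) ^ 2 * I_sq
  rw [exp_eq_one_iff_of_mul_self_eq_sq (by simp [Real.pi_ne_zero]) hsq, ← exp_eq_exp_ℂ]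
  exact exp_two_pi_mul_I

theorem exp_smul_ne_one_of_mul_self_eq_pos {T : ℝ} (hc : 0 < c) (hT : 0 < T)
    (hx : x * x = (c : ℂ) • 1) : NormedSpace.exp ((T : ℂ) • x) ≠ 1 := by
  have hTc : 0 < T * √c := by positivity
  have hsq : ((T : ℂ) • x) * ((T : ℂ) • x) = ((T * √c : ℝ) : ℂ) ^ 2 • 1 := by
    rw [smul_mul_smul_comm, hx, smul_smul]
    congr 1
    have hT' : T * T * c = (T * √c) ^ 2 := by rw [mul_pow, Real.sq_sqrt hc.le]; ring
    exact_mod_cast hT'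
  rw [Ne, exp_eq_one_iff_of_mul_self_eq_sq (by exact_mod_cast hTc.ne') hsq, ← exp_eq_exp_ℂ,
    ← ofReal_exp, ofReal_eq_one, Real.exp_eq_one_iff]
  exact hTc.ne'

theorem exists_pos_exp_smul_eq_one_iff (hx : x * x = (c : ℂ) • 1) :
    (∃ T : ℝ, 0 < T ∧ NormedSpace.exp ((T : ℂ) • x) = 1) ↔ c < 0 ∨ x = 0 := by
  let +nondep : NormedAlgebra ℚ A := .restrictScalars ℚ ℂ A
  constructor
  · rintro ⟨T, hT, h⟩
    rcases lt_trichotomy c 0 with hc | rfl | hc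
    · exact .inl hc
    · rw [exp_eq_one_add_of_mul_self_eq_zero (by simp [hx])] at h
      simpa [hT.ne'] using h
    · exact absurd h (exp_smul_ne_one_of_mul_self_eq_pos hc hT hx)
  · rintro (hc | rfl)
    · have := Real.sqrt_pos.mpr (neg_pos.mpr hc)
      exact ⟨_, by positivity, exp_smul_eq_one_of_mul_self_eq_neg hc hx⟩
    · exact ⟨1, one_pos, by simp⟩

end ComplexAlgebra

theorem smul_Kx_add_smul_Ky_add_smul_Kz_mul_self (m₁ m₂ m₃ : ℝ) :
    (m₁ • Kx + m₂ • Ky + m₃ • Kz) * (m₁ • Kx + m₂ • Ky + m₃ • Kz) =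
      (((m₁ ^ 2 + m₂ ^ 2 - m₃ ^ 2) / 4 : ℝ) : ℂ) • 1 := by
  ext i j
  fin_cases i <;> fin_cases j <;>
    simp [Kx, Ky, Kz, Matrix.mul_apply, Fin.sum_univ_two, Complex.ext_iff, -ofReal_pow] <;>
    norm_num <;> constructor <;> ring

theorem smul_Kx_add_smul_Ky_add_smul_Kz_eq_zero_iff (m₁ m₂ m₃ : ℝ) :
    m₁ • Kx + m₂ • Ky + m₃ • Kz = 0 ↔ m₁ = 0 ∧ m₂ = 0 ∧ m₃ = 0 := by
  refine ⟨fun h ↦ ?_, by rintro ⟨rfl, rfl, rfl⟩; simp⟩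
  have h00 := congrFun (congrFun h 0) 0
  have h01 := congrFun (congrFun h 0) 1
  simp [Kx, Ky, Kz, Complex.ext_iff] at h00 h01
  exact ⟨h01.2, h01.1, h00⟩

theorem stmt7 (m₁ m₂ m₃ : ℝ)
    (M : Matrix (Fin 2) (Fin 2) ℂ)
    (hM : M = m₁ • Kx + m₂ • Ky + m₃ • Kz) :
    (∃ T : ℝ, T > 0 ∧ ∀ t : ℝ,
        NormedSpace.exp ((t + T) • M) = NormedSpace.exp (t • M)) ↔
      (m₁^2 + m₂^2 - m₃^2 < 0 ∨ (m₁ = 0 ∧ m₂ = 0 ∧ m₃ = 0)) := by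
  have hsq := hM ▸ smul_Kx_add_smul_Ky_add_smul_Kz_mul_self m₁ m₂ m₃
  open scoped Matrix.Norms.Operator in
  calc (∃ T : ℝ, T > 0 ∧ ∀ t : ℝ, NormedSpace.exp ((t + T) • M) = NormedSpace.exp (t • M))
      ↔ ∃ T : ℝ, 0 < T ∧ NormedSpace.exp ((T : ℂ) • M) = 1 :=
        exists_congr fun T ↦ and_congr_right fun _ ↦ periodic_exp_smul_iff M T
    _ ↔ (m₁ ^ 2 + m₂ ^ 2 - m₃ ^ 2) / 4 < 0 ∨ M = 0 := exists_pos_exp_smul_eq_one_iff hsq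
    _ ↔ _ := by rw [hM, smul_Kx_add_smul_Ky_add_smul_Kz_eq_zero_iff, div_neg_iff]; norm_num
end

section
/- Let X(t) = [[x₁+ix₂, x₃-ix₄],[x₃+ix₄, x₁-ix₂]] (with real functions x₁,...,x₄) solve the ODE X'(t) = (ε K̄x + a K̄z + u(t) K̄y) X(t) for a locally integrable (or continuous) real control u, with ε = 1 and |a| < 1. Then the function t ↦ (x₁(t)-x₄(t))² - (x₂(t)-x₃(t))² is nonincreasing along every trajectory. -/
/-! In the coordinates `p = x₁ - x₄`, `q = x₂ - x₃` the system closes up: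
`2p' = (a + u) q - p` and `2q' = q - (a - u) p`. The control drops out of
`(p² - q²)' = 2apq - p² - q²`, which is `≤ 0` as soon as `|a| ≤ 1`. -/

lemma two_mul_mul_mul_le_sq_add_sq {a : ℝ} (ha : |a| ≤ 1) (p q : ℝ) :
    2 * a * p * q ≤ p ^ 2 + q ^ 2 := by
  obtain ⟨ha₁, ha₂⟩ := abs_le.mp ha
  nlinarith [mul_nonneg (sub_nonneg.mpr ha₂) (sq_nonneg (p - q)),
    mul_nonneg (neg_le_iff_add_nonneg.mp ha₁) (sq_nonneg (p + q))]

lemma antitone_sq_sub_sq_of_hasDerivAt {a : ℝ} (ha : |a| ≤ 1) {u p q : ℝ → ℝ}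
    (hp : ∀ t, HasDerivAt p (((a + u t) * q t - p t) / 2) t)
    (hq : ∀ t, HasDerivAt q ((q t - (a - u t) * p t) / 2) t) :
    Antitone (fun t => p t ^ 2 - q t ^ 2) := by
  have hderiv : ∀ t, HasDerivAt (fun t => p t ^ 2 - q t ^ 2)
      (2 * a * p t * q t - (p t ^ 2 + q t ^ 2)) t := by
    intro t
    refine (((hp t).pow 2).sub ((hq t).pow 2)).congr_deriv ?_
    push_cast
    ring
  exact antitone_of_hasDerivAt_nonpos hderiv fun t =>
    sub_nonpos.mpr (two_mul_mul_mul_le_sq_add_sq ha _ _)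

theorem stmt13 (a : ℝ) (ha : |a| < 1) (u x₁ x₂ x₃ x₄ : ℝ → ℝ)
    (h₁ : ∀ t, HasDerivAt x₁ ((a * x₂ t + x₄ t - u t * x₃ t) / 2) t)
    (h₂ : ∀ t, HasDerivAt x₂ ((-(a * x₁ t) - x₃ t - u t * x₄ t) / 2) t)
    (h₃ : ∀ t, HasDerivAt x₃ ((-(a * x₄ t) - x₂ t - u t * x₁ t) / 2) t)
    (h₄ : ∀ t, HasDerivAt x₄ ((a * x₃ t + x₁ t - u t * x₂ t) / 2) t) :
    Antitone (fun t => (x₁ t - x₄ t)^2 - (x₂ t - x₃ t)^2) := by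
  refine antitone_sq_sub_sq_of_hasDerivAt (u := u) ha.le (fun t => ?_) (fun t => ?_)
  · exact ((h₁ t).sub (h₄ t)).congr_deriv (by ring)
  · exact ((h₂ t).sub (h₃ t)).congr_deriv (by ring)
end

section
/- If A, B ∈ su(1,1) and [A,B] is parabolic (i.e., q([A,B]) = 0), then the Lie algebra generated by {A, B} is contained in span{A, B}, hence has real dimension at most 2 and is a proper Lie subalgebra of su(1,1). -/
/-!
Identify `su(1,1)` with `ℝ³` via `v ↦ v₀ K̄x + v₁ K̄y + v₂ K̄z`. The bracket then becomes the
Lorentzian cross product `a ×_L b = η (a × b)` with `η = diag(1, 1, -1)`, and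
`det (a ×_L b, a, b) = (a ×_L b) ⬝ (a × b) = q(a ×_L b)`. So if `[A, B]` is parabolic, then
`[A, B]`, `A`, `B` are linearly dependent: either `A`, `B` are independent and `[A, B]` lies in
their span, or they are dependent and `[A, B] = 0`. In both cases `span {A, B}` is closed under
the bracket, hence is the Lie algebra generated by `A` and `B`.
-/

open Matrix Complex

attribute [local instance 100] LieRing.ofAssociativeRing

namespace LieSubalgebra

variable {R L : Type*} [CommRing R] [LieRing L] [LieAlgebra R L] {x y : L}

theorem lie_mem_span_pair (h : ⁅x, y⁆ ∈ Submodule.span R {x, y}) {u v : L}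
    (hu : u ∈ Submodule.span R {x, y}) (hv : v ∈ Submodule.span R {x, y}) :
    ⁅u, v⁆ ∈ Submodule.span R {x, y} := by
  obtain ⟨p, q, rfl⟩ := Submodule.mem_span_pair.mp hu
  obtain ⟨r, s, rfl⟩ := Submodule.mem_span_pair.mp hv
  have hbilin : ⁅p • x + q • y, r • x + s • y⁆ = (p * s - q * r) • ⁅x, y⁆ := by
    simp only [lie_add, add_lie, smul_lie, lie_smul, lie_self, ← lie_skew y x]
    module
  exact hbilin ▸ Submodule.smul_mem _ _ h

theorem toSubmodule_lieSpan_pair_eq_span (h : ⁅x, y⁆ ∈ Submodule.span R {x, y}) :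
    (lieSpan R L {x, y}).toSubmodule = Submodule.span R {x, y} := by
  let S : LieSubalgebra R L :=
    { Submodule.span R {x, y} with lie_mem' := lie_mem_span_pair h }
  refine le_antisymm (show lieSpan R L {x, y} ≤ S from lieSpan_le.mpr Submodule.subset_span) ?_
  exact Submodule.span_le.mpr subset_lieSpan

end LieSubalgebra

section LorentzCross

variable {K : Type*} [Field K]

theorem mem_span_pair_of_dotProduct_cross_eq_zero {a b w : Fin 3 → K}
    (hab : LinearIndependent K ![a, b]) (hw : w ⬝ᵥ a ⨯₃ b = 0) :
    w ∈ Submodule.span K {a, b} := by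
  by_contra hmem
  have hli : LinearIndependent K ![w, a, b] := hab.finCons (by rwa [range_cons_cons_empty])
  rw [triple_product_eq_det] at hw
  exact ((isUnit_iff_isUnit_det _).mp (linearIndependent_rows_iff_isUnit.mp hli)).ne_zero hw

def lorentzCross (a b : Fin 3 → K) : Fin 3 → K := ![(a ⨯₃ b) 0, (a ⨯₃ b) 1, -(a ⨯₃ b) 2]

def lorentzQuad (v : Fin 3 → K) : K := v 0 ^ 2 + v 1 ^ 2 - v 2 ^ 2

theorem lorentzCross_dotProduct_cross (a b : Fin 3 → K) :
    lorentzCross a b ⬝ᵥ a ⨯₃ b = lorentzQuad (lorentzCross a b) := by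
  simp only [lorentzCross, lorentzQuad, dotProduct, Fin.sum_univ_three, cons_val_zero,
    cons_val_one, cons_val]
  ring

theorem lorentzCross_mem_span_pair {a b : Fin 3 → K} (h : lorentzQuad (lorentzCross a b) = 0) :
    lorentzCross a b ∈ Submodule.span K {a, b} := by
  by_cases hab : LinearIndependent K ![a, b]
  · exact mem_span_pair_of_dotProduct_cross_eq_zero hab (lorentzCross_dotProduct_cross a b ▸ h)
  · rw [← crossProduct_ne_zero_iff_linearIndependent, not_not] at hab
    simp [lorentzCross, hab, ← Matrix.zero_empty]

end LorentzCross

theorem Kx_lie_Ky : ⁅Kx, Ky⁆ = -Kz := by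
  ext i j
  fin_cases i <;> fin_cases j <;> simp [Ring.lie_def, Kx, Ky, Kz] <;> ring

theorem Ky_lie_Kz : ⁅Ky, Kz⁆ = Kx := by
  ext i j
  fin_cases i <;> fin_cases j <;> simp [Ring.lie_def, Kx, Ky, Kz] <;> ring

theorem Kz_lie_Kx : ⁅Kz, Kx⁆ = Ky := by
  ext i j
  fin_cases i <;> fin_cases j <;> simp [Ring.lie_def, Kx, Ky, Kz] <;> ring_nf <;>
    simp [Complex.I_sq] <;> ring

noncomputable def su11Coords : (Fin 3 → ℝ) →ₗ[ℝ] Matrix (Fin 2) (Fin 2) ℂ :=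
  Fintype.linearCombination ℝ ![Kx, Ky, Kz]

theorem su11Coords_apply (v : Fin 3 → ℝ) : su11Coords v = v 0 • Kx + v 1 • Ky + v 2 • Kz := by
  simp [su11Coords, Fintype.linearCombination_apply, Fin.sum_univ_three]

theorem lie_su11Coords (a b : Fin 3 → ℝ) :
    ⁅su11Coords a, su11Coords b⁆ = su11Coords (lorentzCross a b) := by
  simp only [su11Coords_apply, lie_add, add_lie, smul_lie, lie_smul, lie_self, Kx_lie_Ky,
    Ky_lie_Kz, Kz_lie_Kx, ← lie_skew Kx Kz, ← lie_skew Ky Kx, ← lie_skew Kz Ky]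
  simp only [lorentzCross, cross_apply, cons_val_zero, cons_val_one, cons_val]
  module

theorem stmt15 (a₁ a₂ a₃ b₁ b₂ b₃ : ℝ)
    (A B : Matrix (Fin 2) (Fin 2) ℂ)
    (hA : A = a₁ • Kx + a₂ • Ky + a₃ • Kz)
    (hB : B = b₁ • Kx + b₂ • Ky + b₃ • Kz)
    (hpar : (a₂*b₃ - a₃*b₂)^2 + (a₃*b₁ - a₁*b₃)^2 - (a₁*b₂ - a₂*b₁)^2 = 0) :
    ∀ M ∈ LieSubalgebra.lieSpan ℝ (Matrix (Fin 2) (Fin 2) ℂ) {A, B},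
      M ∈ Submodule.span ℝ ({A, B} : Set (Matrix (Fin 2) (Fin 2) ℂ)) := by
  have hA' : A = su11Coords ![a₁, a₂, a₃] := by simp [hA, su11Coords_apply]
  have hB' : B = su11Coords ![b₁, b₂, b₃] := by simp [hB, su11Coords_apply]
  have hq : lorentzQuad (lorentzCross ![a₁, a₂, a₃] ![b₁, b₂, b₃]) = 0 := by
    simp only [lorentzQuad, lorentzCross, cross_apply, cons_val_zero, cons_val_one, cons_val]
    linear_combination hpar
  have hlie : ⁅A, B⁆ ∈ Submodule.span ℝ {A, B} := by
    have h := Submodule.mem_map_of_mem (f := su11Coords) (lorentzCross_mem_span_pair hq)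
    rwa [Submodule.map_span, Set.image_pair, ← lie_su11Coords, ← hA', ← hB'] at h
  intro M hM
  rw [← LieSubalgebra.toSubmodule_lieSpan_pair_eq_span hlie]
  exact hM
end
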